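/- There exists a continuous function ℝ → ℝ that is nowhere differentiable, refuting the 'obvious' claim that every continuous function is differentiable at almost all points. -/

import Mathlib

/-!
The Takagi function `T x = ∑ₘ 2⁻ᵐ d(2ᵐ x, ℤ)` is a uniform limit of continuous functions. Its
`m`-th term is affine with slope `±1` on every dyadic interval of length `2^-(m+1)` and vanishes at
the endpoints of dyadic intervals of length `2⁻ⁿ` when `m ≥ n`. So the slope of `T` across the
dyadic interval of length `2⁻ⁿ` containing `x` is a sum of `n` signs, and consecutive slopes differ
by `±1`. Were `T` differentiable at `x`, these slopes would converge to `T' x`, because the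
intervals contain `x` and shrink to it.
-/

open Filter Topology Set Finset

theorem HasDerivAt.tendsto_slope_of_le_of_le {E ι : Type*} [NormedAddCommGroup E]
    [NormedSpace ℝ E] {f : ℝ → E} {f' : E} {x : ℝ} {l : Filter ι} {u v : ι → ℝ}
    (hf : HasDerivAt f f' x) (hu : Tendsto u l (𝓝 x)) (hv : Tendsto v l (𝓝 x))
    (hux : ∀ i, u i ≤ x) (hxv : ∀ i, x ≤ v i) (huv : ∀ i, u i < v i) :
    Tendsto (fun i => slope f (u i) (v i)) l (𝓝 f') := by
  rw [Metric.tendsto_nhds]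
  intro ε hε
  have hsmall := (hasDerivAt_iff_isLittleO.1 hf).def (half_pos hε)
  filter_upwards [hu.eventually hsmall, hv.eventually hsmall] with i hui hvi
  have hlen : v i - u i ≠ 0 := (sub_pos.2 (huv i)).ne'
  have hsplit : slope f (u i) (v i) - f' = (v i - u i)⁻¹ •
      ((f (v i) - f x - (v i - x) • f') - (f (u i) - f x - (u i - x) • f')) := by
    rw [slope_def_module]
    match_scalars <;> field_simp <;> ring
  rw [dist_eq_norm, hsplit, norm_smul]
  calc ‖(v i - u i)⁻¹‖ * ‖(f (v i) - f x - (v i - x) • f') - (f (u i) - f x - (u i - x) • f')‖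
      ≤ ‖(v i - u i)⁻¹‖ * (ε / 2 * ‖v i - x‖ + ε / 2 * ‖u i - x‖) := by
        gcongr; exact (norm_sub_le _ _).trans (add_le_add hvi hui)
    _ = ε / 2 := by
        simp only [Real.norm_eq_abs]
        rw [abs_of_nonneg (sub_nonneg.2 (hxv i)), abs_of_nonpos (sub_nonpos.2 (hux i)), abs_inv,
          abs_of_pos (sub_pos.2 (huv i))]
        field_simp; ring
    _ < ε := half_lt_self hε

noncomputable def sawtooth (x : ℝ) : ℝ := |x - round x|

lemma sawtooth_intCast (n : ℤ) : sawtooth n = 0 := by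
  simp [sawtooth]

lemma sawtooth_nonneg (x : ℝ) : 0 ≤ sawtooth x := abs_nonneg _

lemma sawtooth_le_half (x : ℝ) : sawtooth x ≤ 1 / 2 := abs_sub_round x

lemma lipschitzWith_sawtooth : LipschitzWith 1 sawtooth :=
  LipschitzWith.of_le_add fun x y => by
    have := (round_le x (round y)).trans (abs_sub_le x y (round y))
    rw [Real.dist_eq]; unfold sawtooth; linarith

lemma sawtooth_eq_abs_sub {x : ℝ} {n : ℤ} (h : |x - n| ≤ 1 / 2) : sawtooth x = |x - n| := by
  refine le_antisymm (round_le x n) (not_lt.1 fun hlt => ?_)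
  have hne : round x ≠ n := by rintro rfl; exact lt_irrefl _ hlt
  have hgap : (1 : ℝ) ≤ |(round x : ℝ) - n| := by exact_mod_cast Int.one_le_abs (sub_ne_zero.2 hne)
  have htri := abs_sub_le (round x : ℝ) x n
  rw [abs_sub_comm (round x : ℝ) x] at htri
  unfold sawtooth at hlt
  linarith

lemma sawtooth_sub_sawtooth {p : ℤ} {y z : ℝ} (hy : y ∈ Icc (p / 2 : ℝ) ((p + 1) / 2))
    (hz : z ∈ Icc (p / 2 : ℝ) ((p + 1) / 2)) :
    sawtooth z - sawtooth y = (-1) ^ p * (z - y) := by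
  rcases Int.even_or_odd' p with ⟨q, rfl | rfl⟩
  · have hlin : ∀ w ∈ Icc ((2 * q : ℤ) / 2 : ℝ) (((2 * q : ℤ) + 1) / 2), sawtooth w = w - q := by
      intro w ⟨hw₁, hw₂⟩
      push_cast at hw₁ hw₂
      rw [sawtooth_eq_abs_sub (n := q) (abs_le.2 ⟨by linarith, by linarith⟩),
        abs_of_nonneg (by linarith)]
    rw [hlin y hy, hlin z hz, Even.neg_one_zpow ⟨q, two_mul q⟩]
    ring
  · have hlin : ∀ w ∈ Icc ((2 * q + 1 : ℤ) / 2 : ℝ) (((2 * q + 1 : ℤ) + 1) / 2),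
        sawtooth w = q + 1 - w := by
      intro w ⟨hw₁, hw₂⟩
      push_cast at hw₁ hw₂
      rw [sawtooth_eq_abs_sub (n := q + 1) (abs_le.2 ⟨by push_cast; linarith, by push_cast; linarith⟩),
        abs_of_nonpos (by push_cast; linarith)]
      push_cast; ring
    rw [hlin y hy, hlin z hz, Odd.neg_one_zpow ⟨q, rfl⟩]
    ring

noncomputable def takagi (x : ℝ) : ℝ := ∑' m : ℕ, sawtooth (2 ^ m * x) / 2 ^ m

lemma continuous_takagi : Continuous takagi := by
  refine continuous_tsum (fun m => ?_) summable_geometric_two (fun m x => ?_)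
  · exact (lipschitzWith_sawtooth.continuous.comp (continuous_const_mul _)).div_const _
  · rw [Real.norm_eq_abs, abs_of_nonneg (div_nonneg (sawtooth_nonneg _) (by positivity)),
      one_div_pow]
    gcongr
    linarith [sawtooth_le_half (2 ^ m * x)]

lemma takagi_intCast_div_two_pow (k : ℤ) (n : ℕ) :
    takagi (k / 2 ^ n) = ∑ m ∈ range n, sawtooth (2 ^ m * (k / 2 ^ n)) / 2 ^ m := by
  refine tsum_eq_sum fun m hm => ?_
  obtain ⟨d, rfl⟩ := Nat.exists_eq_add_of_le (not_lt.1 (mem_range.not.1 hm))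
  have hint : (2 : ℝ) ^ (n + d) * (k / 2 ^ n) = ((2 ^ d * k : ℤ) : ℝ) := by
    push_cast
    rw [pow_add]
    field_simp
  rw [hint, sawtooth_intCast, zero_div]

lemma Icc_floor_mul_div_subset (t : ℝ) {N : ℕ} (hN : 0 < N) :
    Icc ((⌊N * t⌋ : ℝ) / N) ((⌊N * t⌋ + 1) / N) ⊆ Icc (⌊t⌋ : ℝ) (⌊t⌋ + 1) := by
  have hN' : (0 : ℝ) < N := Nat.cast_pos.2 hN
  have hlow : N * ⌊t⌋ ≤ ⌊N * t⌋ :=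
    Int.le_floor.2 (by push_cast; exact mul_le_mul_of_nonneg_left (Int.floor_le t) hN'.le)
  have hhigh : ⌊N * t⌋ < N * (⌊t⌋ + 1) :=
    Int.floor_lt.2 (by push_cast; exact mul_lt_mul_of_pos_left (Int.lt_floor_add_one t) hN')
  refine Icc_subset_Icc ?_ ?_
  · rw [le_div_iff₀ hN', mul_comm]
    exact_mod_cast hlow
  · rw [div_le_iff₀ hN', mul_comm _ (N : ℝ)]
    exact_mod_cast hhigh

lemma slope_takagi_floor (x : ℝ) (n : ℕ) :
    slope takagi (⌊2 ^ n * x⌋ / 2 ^ n) ((⌊2 ^ n * x⌋ + 1) / 2 ^ n) =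
      ∑ m ∈ range n, (-1 : ℝ) ^ ⌊2 ^ (m + 1) * x⌋ := by
  set k := ⌊2 ^ n * x⌋ with hk
  have hk₁ : (k : ℝ) + 1 = ((k + 1 : ℤ) : ℝ) := by push_cast; ring
  rw [slope_def_field, hk₁, takagi_intCast_div_two_pow, takagi_intCast_div_two_pow,
    ← sum_sub_distrib, sum_div]
  refine sum_congr rfl fun m hm => ?_
  obtain ⟨d, rfl⟩ := Nat.exists_eq_add_of_lt (mem_range.1 hm)
  have hscale (j : ℝ) : (2 : ℝ) ^ m * (j / 2 ^ (m + d + 1)) = j / 2 ^ d / 2 := by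
    rw [pow_succ, pow_add]; field_simp
  have hk₂ : k = ⌊((2 ^ d : ℕ) : ℝ) * (2 ^ (m + 1) * x)⌋ := by
    rw [hk]; congr 1; push_cast; ring
  have hnest := Icc_floor_mul_div_subset (2 ^ (m + 1) * x) (Nat.two_pow_pos d)
  rw [← hk₂, Nat.cast_pow, Nat.cast_ofNat] at hnest
  have hhalf {w : ℝ} (hw : w ∈ Icc (⌊2 ^ (m + 1) * x⌋ : ℝ) (⌊2 ^ (m + 1) * x⌋ + 1)) :
      w / 2 ∈ Icc ((⌊2 ^ (m + 1) * x⌋ : ℝ) / 2) ((⌊2 ^ (m + 1) * x⌋ + 1) / 2) :=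
    ⟨div_le_div_of_nonneg_right hw.1 two_pos.le, div_le_div_of_nonneg_right hw.2 two_pos.le⟩
  rw [← sub_div, hscale, hscale, ← hk₁,
    sawtooth_sub_sawtooth (hhalf (hnest (left_mem_Icc.2 ?_))) (hhalf (hnest (right_mem_Icc.2 ?_)))]
  · field_simp; ring
  all_goals gcongr; linarith

lemma floor_mul_div_le (x : ℝ) {c : ℝ} (hc : 0 < c) : ⌊c * x⌋ / c ≤ x := by
  rw [div_le_iff₀ hc, mul_comm]
  exact Int.floor_le _

lemma lt_floor_mul_add_one_div (x : ℝ) {c : ℝ} (hc : 0 < c) : x < (⌊c * x⌋ + 1) / c := by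
  rw [lt_div_iff₀ hc, mul_comm]
  exact Int.lt_floor_add_one _

lemma tendsto_floor_two_pow_mul_add_div (x c : ℝ) :
    Tendsto (fun n : ℕ => (⌊2 ^ n * x⌋ + c) / 2 ^ n) atTop (𝓝 x) := by
  have hgeom : Tendsto (fun n : ℕ => (1 / 2 : ℝ) ^ n) atTop (𝓝 0) :=
    tendsto_pow_atTop_nhds_zero_of_lt_one (by norm_num) (by norm_num)
  have hfloor : Tendsto (fun n : ℕ => (⌊2 ^ n * x⌋ : ℝ) / 2 ^ n) atTop (𝓝 x) := by
    refine tendsto_of_tendsto_of_tendsto_of_le_of_le (by simpa using tendsto_const_nhds.sub hgeom)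
      tendsto_const_nhds (fun n => ?_) (fun n => floor_mul_div_le x (by positivity))
    rw [le_div_iff₀ (by positivity), sub_mul, inv_mul_cancel₀ (by positivity), mul_comm]
    exact (Int.sub_one_lt_floor _).le
  have hsplit (n : ℕ) : (⌊2 ^ n * x⌋ + c) / 2 ^ n = ⌊2 ^ n * x⌋ / 2 ^ n + c * (1 / 2) ^ n := by
    rw [add_div, one_div_pow, mul_one_div]
  simpa only [hsplit, mul_zero, add_zero] using hfloor.add (hgeom.const_mul c)

theorem exists_continuous_nowhere_differentiable :
    ∃ f : ℝ → ℝ, Continuous f ∧ ∀ x : ℝ, ¬ DifferentiableAt ℝ f x := by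
  refine ⟨takagi, continuous_takagi, fun x hx => ?_⟩
  set a : ℕ → ℝ := fun n => ∑ m ∈ range n, (-1 : ℝ) ^ ⌊2 ^ (m + 1) * x⌋
  have hlim : Tendsto a atTop (𝓝 (deriv takagi x)) := by
    simp only [a, ← slope_takagi_floor]
    refine hx.hasDerivAt.tendsto_slope_of_le_of_le
      (by simpa using tendsto_floor_two_pow_mul_add_div x 0) (tendsto_floor_two_pow_mul_add_div x 1)
      (fun n => floor_mul_div_le x (by positivity))
      (fun n => (lt_floor_mul_add_one_div x (by positivity)).le) (fun n => ?_)
    gcongr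
    linarith
  have hstep : Tendsto (fun n => a (n + 1) - a n) atTop (𝓝 0) := by
    simpa using ((tendsto_add_atTop_iff_nat 1).2 hlim).sub hlim
  simp only [a, sum_range_succ, add_sub_cancel_left] at hstep
  simpa [abs_neg_one_zpow] using hstep.abs
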